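/- arXiv:1812.07604 — 2 statements merged into one kernel-verified Lean document; each statement's English description precedes it below -/
import Mathlib

section
/- For every n ≥ 3, the Lusternik–Schnirelmann category of 𝕊¹_n × 𝕊¹_n satisfies cat(𝕊¹_n × 𝕊¹_n) ≤ 3; in fact the three open sets Q_i = (𝕊¹_n − {y_i}) × (𝕊¹_n − {y_i}), i = 1, 2, 3, cover 𝕊¹_n × 𝕊¹_n and each inclusion Q_i ↪ 𝕊¹_n × 𝕊¹_n is nullhomotopic. -/
open Set

/-- `X` is covered by `k` open sets, each of whose inclusion maps into `X` is
nullhomotopic. -/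
def CatCover (X : Type*) [TopologicalSpace X] (k : ℕ) : Prop :=
  ∃ U : Fin k → Set X,
    (∀ i, IsOpen (U i)) ∧ (⋃ i, U i) = Set.univ ∧
    ∀ i, ContinuousMap.Nullhomotopic (⟨Subtype.val, continuous_subtype_val⟩ : C(U i, X))

/-- The (unreduced) Lusternik–Schnirelmann category of `X`: the least number of open
sets covering `X` such that each inclusion map into `X` is nullhomotopic. -/
noncomputable def lsCat (X : Type*) [TopologicalSpace X] : ℕ := sInf {k | CatCover X k}
/-- The underlying set of the finite model `𝕊¹_n` of the circle (`2n` points):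
`Sum.inl i` is `x_i` and `Sum.inr i` is `y_i`. -/
def SCirc (n : ℕ) : Type := Fin n ⊕ Fin n

namespace SCirc

/-- The minimal point `x_i` of `𝕊¹_n`. -/
def x {n : ℕ} (i : Fin n) : SCirc n := Sum.inl i

/-- The maximal point `y_i` of `𝕊¹_n`. -/
def y {n : ℕ} (i : Fin n) : SCirc n := Sum.inr i

/-- The partial order on `𝕊¹_n` generated by `x_i < y_i` and `x_{(i-1) mod n} < y_i`. -/
def le {n : ℕ} : SCirc n → SCirc n → Prop
  | Sum.inl i, Sum.inl j => i = j
  | Sum.inr i, Sum.inr j => i = j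
  | Sum.inl i, Sum.inr j => i = j ∨ (i : ℕ) = ((j : ℕ) + n - 1) % n
  | Sum.inr _, Sum.inl _ => False

/-- The Alexandrov topology on `𝕊¹_n`: open sets are down-sets.  The minimal open
neighbourhoods are `x_i^↓ = {x_i}` and `y_i^↓ = {y_i, x_i, x_{(i-1) mod n}}`. -/
instance (n : ℕ) : TopologicalSpace (SCirc n) where
  IsOpen U := ∀ a ∈ U, ∀ b, SCirc.le b a → b ∈ U
  isOpen_univ := fun _ _ _ _ => trivial
  isOpen_inter := fun _ _ hU hV a ha b hba => ⟨hU a ha.1 b hba, hV a ha.2 b hba⟩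
  isOpen_sUnion := fun S hS a ha b hba => by
    obtain ⟨U, hUS, haU⟩ := ha
    exact ⟨U, hUS, hS U hUS a haU b hba⟩

end SCirc

/-!
Removing a maximal point `y k` from `𝕊¹_n` leaves the fence
`x k < y (k+1) > x (k+1) < ⋯ > x (k-1)`. Two maps with `f z ⤳ g z` for every `z` are homotopic
(the homotopy jumps from `f` to `g` at time `1`), so the inclusion of the fence can be slid along
it, one specialization at a time, onto its endpoint; hence each `Q i`, a square of such a fence,
includes nullhomotopically. The three points `y 1`, `y 2`, `y (3 mod n)` are distinct, so every pair
of points of `𝕊¹_n` avoids one of them, which is why the three squares cover.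
-/

open Function

theorem continuous_of_forall_specializes {α β : Type*} [TopologicalSpace α] [TopologicalSpace β]
    [AlexandrovDiscrete α] {f : α → β} (hf : ∀ a b, a ⤳ b → f a ⤳ f b) : Continuous f :=
  continuous_def.2 fun _U hU ↦ isOpen_iff_forall_specializes.2 fun a b hab hb ↦
    (hf a b hab).mem_open hU hb

namespace ContinuousMap

variable {Z X Y : Type*} [TopologicalSpace Z] [TopologicalSpace X] [TopologicalSpace Y]

theorem Homotopic.of_forall_specializes {f g : C(Z, X)} (h : ∀ z, f z ⤳ g z) :
    f.Homotopic g := by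
  classical
  refine ⟨{ toFun := {p : unitInterval × Z | p.1 = 1}.piecewise (g ∘ Prod.snd) (f ∘ Prod.snd)
            continuous_toFun := ?_
            map_zero_left := fun z ↦ ?_
            map_one_left := fun z ↦ ?_ }⟩
  · exact (isClosed_eq continuous_fst continuous_const).continuous_piecewise_of_specializes
      (g.continuous.comp continuous_snd) (f.continuous.comp continuous_snd) fun p ↦ h p.2
  · simp [Set.piecewise]
  · simp [Set.piecewise]

theorem Nullhomotopic.prodMk {f : C(Z, X)} {g : C(Z, Y)} (hf : f.Nullhomotopic)
    (hg : g.Nullhomotopic) : (f.prodMk g).Nullhomotopic := by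
  obtain ⟨x, ⟨F⟩⟩ := hf
  obtain ⟨y, ⟨G⟩⟩ := hg
  exact ⟨(x, y), ⟨F.prod G⟩⟩

theorem nullhomotopic_subtype_val_prod {s : Set X} {t : Set Y}
    (hs : (⟨Subtype.val, continuous_subtype_val⟩ : C(s, X)).Nullhomotopic)
    (ht : (⟨Subtype.val, continuous_subtype_val⟩ : C(t, Y)).Nullhomotopic) :
    (⟨Subtype.val, continuous_subtype_val⟩ : C(s ×ˢ t, X × Y)).Nullhomotopic :=
  (hs.comp_left (⟨fun q ↦ ⟨q.1.1, q.2.1⟩, by fun_prop⟩ : C(s ×ˢ t, s))).prodMk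
    (ht.comp_left (⟨fun q ↦ ⟨q.1.2, q.2.2⟩, by fun_prop⟩ : C(s ×ˢ t, t)))

/-- The maps `z ↦ p (max (r z) m)` are continuous because `r` moves by at most one along
specializations, and consecutive ones are pointwise comparable because `p` is a zigzag: they slide
`f` to the constant map `p N`. -/
theorem Nullhomotopic.of_zigzag [AlexandrovDiscrete Z] (f : C(Z, X)) (p : ℕ → X)
    (hp : ∀ m, p m ⤳ p (m + 1) ∨ p (m + 1) ⤳ p m) (r : Z → ℕ) (hr : ∀ z, p (r z) = f z)
    (hadj : ∀ z w, z ⤳ w → r z ≤ r w + 1 ∧ r w ≤ r z + 1) (N : ℕ) (hN : ∀ z, r z ≤ N) :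
    f.Nullhomotopic := by
  let g (m : ℕ) : C(Z, X) := ⟨fun z ↦ p (max (r z) m), continuous_of_forall_specializes
    fun z w hzw ↦ by
      by_cases h : max (r z) (r w) ≤ m
      · rw [max_eq_right (le_of_max_le_left h), max_eq_right (le_of_max_le_right h)]
      · have := hadj z w hzw
        rw [max_eq_left (by omega), max_eq_left (by omega), hr, hr]
        exact hzw.map f.continuous⟩
  have hstep (m : ℕ) : (g m).Homotopic (g (m + 1)) := by
    have hg (z : Z) : g m z = g (m + 1) z ∨ g m z = p m ∧ g (m + 1) z = p (m + 1) := by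
      rcases le_or_gt (r z) m with h | h
      · exact .inr ⟨congrArg p (max_eq_right h), congrArg p (max_eq_right (h.trans m.le_succ))⟩
      · exact .inl (congrArg p ((max_eq_left h.le).trans (max_eq_left h).symm))
    rcases hp m with h | h
    · exact .of_forall_specializes fun z ↦
        (hg z).elim specializes_of_eq fun ⟨e₁, e₂⟩ ↦ e₁ ▸ e₂ ▸ h
    · exact .symm <| .of_forall_specializes fun z ↦
        (hg z).elim (specializes_of_eq ·.symm) fun ⟨e₁, e₂⟩ ↦ e₁ ▸ e₂ ▸ h
  have hchain (m : ℕ) : (g 0).Homotopic (g m) := by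
    induction m with
    | zero => exact .refl _
    | succ m ih => exact ih.trans (hstep m)
  have hg₀ : g 0 = f := by ext z; simp [g, hr]
  have hgN : g N = const Z (p N) := by ext z; simp [g, hN]
  exact ⟨p N, hg₀ ▸ hgN ▸ hchain N⟩

end ContinuousMap

theorem Set.iUnion_compl_singleton_prod_eq_univ {X ι : Type*} [Fintype ι] {g : ι → X}
    (hg : Injective g) (hι : 2 < Fintype.card ι) :
    ⋃ i, ({g i}ᶜ ×ˢ {g i}ᶜ : Set (X × X)) = univ := by
  classical
  refine eq_univ_of_forall fun ⟨a, b⟩ ↦ ?_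
  obtain ⟨_, hi, hab⟩ := Finset.exists_mem_notMem_of_card_lt_card (s := {a, b})
    (t := Finset.univ.image g) (by
      rw [Finset.card_image_of_injective _ hg]
      exact Finset.card_le_two.trans_lt hι)
  obtain ⟨i, -, rfl⟩ := Finset.mem_image.1 hi
  simp only [Finset.mem_insert, Finset.mem_singleton, not_or] at hab
  exact mem_iUnion.2 ⟨i, Ne.symm hab.1, Ne.symm hab.2⟩

theorem Fin.val_sub_one_eq_mod {n : ℕ} [NeZero n] (j : Fin n) :
    ((j - 1 : Fin n) : ℕ) = ((j : ℕ) + n - 1) % n := by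
  rw [Fin.val_sub, Fin.val_one']
  obtain _ | _ | n := n
  · exact absurd rfl (NeZero.ne 0)
  · simp
  · rw [Nat.mod_eq_of_lt (by omega : 1 < n + 2)]
    congr 1
    omega

theorem Fin.val_sub_pos_of_ne {n : ℕ} [NeZero n] {j k : Fin n} (h : j ≠ k) :
    0 < ((j - k : Fin n) : ℕ) :=
  Nat.pos_of_ne_zero (Fin.val_ne_zero_iff.2 (sub_ne_zero.2 h))

theorem Nat.injective_add_one_mod {m n : ℕ} (h : m ≤ n) :
    Injective fun i : Fin m ↦ ((i : ℕ) + 1) % n := fun i j hij ↦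
  Fin.ext ((Nat.ModEq.add_right_cancel' 1 hij).eq_of_lt_of_lt (by omega) (by omega))

namespace SCirc

open Fin.NatCast

variable {n : ℕ}

instance : Finite (SCirc n) := inferInstanceAs (Finite (Fin n ⊕ Fin n))

theorem le.refl (a : SCirc n) : a.le a := by
  cases a <;> exact rfl

theorem le.trans {a b c : SCirc n} (hab : a.le b) (hbc : b.le c) : a.le c := by
  cases a <;> cases b <;> cases c <;> simp_all [SCirc.le]

theorem specializes_iff_le {a b : SCirc n} : a ⤳ b ↔ a.le b :=
  ⟨fun h ↦ h.mem_open (fun _c hc _d hdc ↦ hdc.trans hc) (le.refl b),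
    fun h ↦ specializes_iff_forall_open.2 fun _U hU hb ↦ hU b hb a h⟩

theorem isOpen_compl_singleton_y (k : Fin n) : IsOpen ({y k}ᶜ : Set (SCirc n)) := by
  rintro (i | j) ha b hba (rfl : b = y k)
  · exact hba
  · exact ha (congrArg y hba).symm

theorem y_injective : Injective (y : Fin n → SCirc n) :=
  Sum.inr_injective

/-- The position of a point on `zigzag k`; `y k`, which is not on it, gets the junk value
`2 * 0 - 1 = 0`. -/
def zigzagIndex (k : Fin n) : SCirc n → ℕ
  | Sum.inl i => 2 * (i - k : Fin n)
  | Sum.inr j => 2 * (j - k : Fin n) - 1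

theorem zigzagIndex_le (k : Fin n) (a : SCirc n) : zigzagIndex k a ≤ 2 * n := by
  rcases a with i | j
  · exact Nat.mul_le_mul_left 2 (i - k).isLt.le
  · exact (Nat.sub_le _ 1).trans (Nat.mul_le_mul_left 2 (j - k).isLt.le)

variable [NeZero n]

theorem x_le_y_iff {i j : Fin n} : (x i).le (y j) ↔ i = j ∨ i + 1 = j := by
  rw [← eq_sub_iff_add_eq, Fin.ext_iff (b := j - 1), Fin.val_sub_one_eq_mod]
  rfl

theorem x_specializes_y (i : Fin n) : x i ⤳ y i :=
  specializes_iff_le.2 (x_le_y_iff.2 (.inl rfl))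

theorem x_specializes_y_add_one (i : Fin n) : x i ⤳ y (i + 1) :=
  specializes_iff_le.2 (x_le_y_iff.2 (.inr rfl))

/-- The `m`-th point of the zigzag `x k < y (k+1) > x (k+1) < ⋯ > x (k-1)` that goes once around
`𝕊¹_n` from `x k`, avoiding `y k`. -/
def zigzag (k : Fin n) (m : ℕ) : SCirc n :=
  if m % 2 = 0 then x (k + (m / 2 : ℕ)) else y (k + (m / 2 + 1 : ℕ))

theorem zigzag_specializes (k : Fin n) (m : ℕ) :
    zigzag k m ⤳ zigzag k (m + 1) ∨ zigzag k (m + 1) ⤳ zigzag k m := by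
  unfold zigzag
  rcases Nat.mod_two_eq_zero_or_one m with h | h
  · left
    rw [if_pos h, if_neg (show ¬(m + 1) % 2 = 0 by omega), show (m + 1) / 2 = m / 2 by omega,
      Nat.cast_succ, ← add_assoc]
    exact x_specializes_y_add_one _
  · right
    rw [if_neg (show ¬m % 2 = 0 by omega), if_pos (show (m + 1) % 2 = 0 by omega),
      show (m + 1) / 2 = m / 2 + 1 by omega]
    exact x_specializes_y _

theorem zigzag_zigzagIndex (k : Fin n) {a : SCirc n} (ha : a ≠ y k) :
    zigzag k (zigzagIndex k a) = a := by
  rcases a with i | j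
  · show zigzag k (2 * (i - k : Fin n)) = x i
    rw [zigzag, if_pos (by omega), Nat.mul_div_cancel_left _ two_pos, Fin.cast_val_eq_self,
      add_sub_cancel]
  · have hv := Fin.val_sub_pos_of_ne (ne_of_apply_ne y ha)
    show zigzag k (2 * (j - k : Fin n) - 1) = y j
    rw [zigzag, if_neg (by omega), show (2 * ((j - k : Fin n) : ℕ) - 1) / 2 + 1 = (j - k : Fin n)
      by omega, Fin.cast_val_eq_self, add_sub_cancel]

theorem zigzagIndex_adjacent (k : Fin n) {a b : SCirc n} (hb : b ≠ y k) (hab : a ⤳ b) :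
    zigzagIndex k a ≤ zigzagIndex k b + 1 ∧ zigzagIndex k b ≤ zigzagIndex k a + 1 := by
  rw [specializes_iff_le] at hab
  rcases a with i | i <;> rcases b with j | j
  · obtain rfl : i = j := hab
    omega
  · have hv := Fin.val_sub_pos_of_ne (ne_of_apply_ne y hb)
    show 2 * ((i - k : Fin n) : ℕ) ≤ 2 * ((j - k : Fin n) : ℕ) - 1 + 1 ∧
      2 * ((j - k : Fin n) : ℕ) - 1 ≤ 2 * ((i - k : Fin n) : ℕ) + 1
    rcases x_le_y_iff.1 hab with rfl | rfl
    · omega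
    · rw [add_sub_right_comm] at hv ⊢
      have h := Fin.val_sub_one_of_ne_zero (Fin.val_ne_zero_iff.1 hv.ne')
      rw [add_sub_cancel_right] at h
      omega
  · exact hab.elim
  · obtain rfl : i = j := hab
    omega

theorem nullhomotopic_compl_y (k : Fin n) :
    (⟨Subtype.val, continuous_subtype_val⟩ : C(({y k}ᶜ : Set (SCirc n)), SCirc n)).Nullhomotopic :=
  .of_zigzag _ (zigzag k) (zigzag_specializes k) (fun a ↦ zigzagIndex k a)
    (fun a ↦ zigzag_zigzagIndex k a.2)
    (fun _ b hab ↦ zigzagIndex_adjacent k b.2 (hab.map continuous_subtype_val)) (2 * n)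
    (fun a ↦ zigzagIndex_le k a)

end SCirc

/-- For every `n ≥ 3`, the Lusternik–Schnirelmann category of
`𝕊¹_n × 𝕊¹_n` satisfies `cat(𝕊¹_n × 𝕊¹_n) ≤ 3`; in fact the three open sets
`Q_i = (𝕊¹_n − {y_i}) × (𝕊¹_n − {y_i})`, `i = 1, 2, 3` (indices taken mod `n`),
cover `𝕊¹_n × 𝕊¹_n` and each inclusion `Q_i ↪ 𝕊¹_n × 𝕊¹_n` is nullhomotopic. -/
theorem lsCat_scirc_sq_le_three (n : ℕ) (hn : 3 ≤ n) :
    lsCat (SCirc n × SCirc n) ≤ 3 ∧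
    (let Q : Fin 3 → Set (SCirc n × SCirc n) := fun i =>
      ({SCirc.y ⟨(i.1 + 1) % n, Nat.mod_lt _ (by omega)⟩}ᶜ : Set (SCirc n)) ×ˢ
        ({SCirc.y ⟨(i.1 + 1) % n, Nat.mod_lt _ (by omega)⟩}ᶜ : Set (SCirc n))
     (⋃ i, Q i) = Set.univ ∧
       ∀ i, IsOpen (Q i) ∧
         ContinuousMap.Nullhomotopic
           (⟨Subtype.val, continuous_subtype_val⟩ : C(Q i, SCirc n × SCirc n))) := by
  have : NeZero n := ⟨by omega⟩
  let c (i : Fin 3) : Fin n := ⟨(i + 1) % n, Nat.mod_lt _ (by omega)⟩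
  have hc : Injective c := fun i j h ↦ Nat.injective_add_one_mod hn (congrArg Fin.val h)
  have hcover : ⋃ i, ({SCirc.y (c i)}ᶜ ×ˢ {SCirc.y (c i)}ᶜ : Set (SCirc n × SCirc n)) = univ :=
    iUnion_compl_singleton_prod_eq_univ (SCirc.y_injective.comp hc) (by simp)
  have hopen (i : Fin 3) :
      IsOpen ({SCirc.y (c i)}ᶜ ×ˢ {SCirc.y (c i)}ᶜ : Set (SCirc n × SCirc n)) :=
    (SCirc.isOpen_compl_singleton_y (c i)).prod (SCirc.isOpen_compl_singleton_y (c i))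
  have hnull (i : Fin 3) :=
    ContinuousMap.nullhomotopic_subtype_val_prod (SCirc.nullhomotopic_compl_y (c i))
      (SCirc.nullhomotopic_compl_y (c i))
  exact ⟨Nat.sInf_le ⟨_, hopen, hcover, hnull⟩, hcover, fun i ↦ ⟨hopen i, hnull i⟩⟩
end

section
/- Let ⋁_{i=1}^m 𝕊¹_{n_i}, with each n_i ≥ 2, be the wedge of m finite models of the circle, formed by identifying the points y_0 of all factors to a single point y_0. Then TC(⋁_{i=1}^m 𝕊¹_{n_i}) ≤ 4. -/
open Set

/-- `Q ⊆ X × X` admits a motion planner: a continuous map `s` from `Q` to the path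
space `P(X) = C(I, X)` (with the compact-open topology) that is a section of the
endpoint map `π : C(I, X) → X × X`, `γ ↦ (γ 0, γ 1)`. -/
def AdmitsMotionPlanner {X : Type*} [TopologicalSpace X] (Q : Set (X × X)) : Prop :=
  ∃ s : C(Q, C(unitInterval, X)), ∀ q : Q, ((s q) 0, (s q) 1) = (q : X × X)

/-- `X × X` is covered by `k` open sets, each admitting a motion planner. -/
def TCCover (X : Type*) [TopologicalSpace X] (k : ℕ) : Prop :=
  ∃ Q : Fin k → Set (X × X),
    (∀ i, IsOpen (Q i)) ∧ (⋃ i, Q i) = Set.univ ∧ ∀ i, AdmitsMotionPlanner (Q i)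

/-- The (unreduced) topological complexity of `X`: the least `k` such that `X × X`
can be covered by `k` open sets, each admitting a motion planner. -/
noncomputable def topologicalComplexity (X : Type*) [TopologicalSpace X] : ℕ :=
  sInf {k | TCCover X k}
/-- `a` is the distinguished point `y_0` of `𝕊¹_k`. -/
def IsBasePt {k : ℕ} (a : SCirc k) : Prop := ∃ j : Fin k, a = SCirc.y j ∧ (j : ℕ) = 0

/-- The relation identifying the points `y_0` of all the circles `𝕊¹_{f i}`. -/
def wedgeRel (m : ℕ) (f : Fin m → ℕ) (a b : Σ i : Fin m, SCirc (f i)) : Prop :=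
  a = b ∨ (IsBasePt a.2 ∧ IsBasePt b.2)

/-- The wedge `⋁_{i} 𝕊¹_{f i}`: the quotient of the disjoint union of the finite
models `𝕊¹_{f i}` identifying the points `y_0` of all factors to a single point,
with the quotient topology. -/
abbrev WedgeSCirc (m : ℕ) (f : Fin m → ℕ) : Type := Quot (wedgeRel m f)

/-!
Let `*` be the wedge point. The open sets `W ∖ {*}` and `{w | w ⤳ *}` (the minimal open
neighbourhood of `*`) cover `W`, and the inclusion of each is homotopic to the constant map at `*`.
Hence each of the four products of these sets admits a motion planner: run the first deformation
to `*`, then the second one backwards.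

If `f y ⤳ g y` for all `y`, the homotopy that stays at `f` and jumps to `g` at time `1` is
continuous, since every open set containing `g y` also contains `f y`. Deleting `y₀` from `𝕊¹_n`
leaves the fence `x₀ < y₁ > x₁ < ⋯ < y_{n-1} > x_{n-1}`. Pushing all fences at once towards their
ends `x_{n-1} < y₀`, one position at a time, gives a zigzag of continuous maps on `W ∖ {*}` from
the identity to a map that specializes to `*`, consecutive maps being comparable in this pointwise
way.
-/
open ContinuousMap

section MotionPlanner

variable {X Y : Type*} [TopologicalSpace X] [TopologicalSpace Y]

noncomputable def ContinuousMap.Homotopy.ofSpecializes {f g : C(Y, X)} (h : ∀ y, f y ⤳ g y) :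
    Homotopy f g where
  toFun p := if p.1 < 1 then f p.2 else g p.2
  continuous_toFun := by
    refine continuous_def.mpr fun U hU => ?_
    have hpre : (fun p : unitInterval × Y => if p.1 < 1 then f p.2 else g p.2) ⁻¹' U =
        univ ×ˢ (g ⁻¹' U) ∪ {t : unitInterval | t < 1} ×ˢ (f ⁻¹' U) := by
      ext ⟨t, y⟩
      by_cases ht : t < 1
      · simpa [ht] using fun hy => (h y).mem_open hU hy
      · simp [ht]
    rw [hpre]
    exact (isOpen_univ.prod (hU.preimage g.continuous)).union
      ((isOpen_lt continuous_id continuous_const).prod (hU.preimage f.continuous))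
  map_zero_left y := by simp
  map_one_left y := by simp

theorem ContinuousMap.Homotopic.of_specializes {f g : C(Y, X)} (h : ∀ y, f y ⤳ g y) :
    f.Homotopic g :=
  ⟨.ofSpecializes h⟩

theorem admitsMotionPlanner_of_homotopic {Q : Set (X × X)}
    (h : ((fst : C(X × X, X)).restrict Q).Homotopic ((snd : C(X × X, X)).restrict Q)) :
    AdmitsMotionPlanner Q := by
  obtain ⟨H⟩ := h
  exact ⟨(H.toContinuousMap.comp prodSwap).curry, fun q => by simp⟩

theorem admitsMotionPlanner_prod {U V : Set X} {x₀ : X}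
    (hU : ((ContinuousMap.id X).restrict U).Homotopic (const U x₀))
    (hV : ((ContinuousMap.id X).restrict V).Homotopic (const V x₀)) :
    AdmitsMotionPlanner (U ×ˢ V) := by
  let pU : C(U ×ˢ V, U) := ⟨fun q => ⟨q.1.1, q.2.1⟩, by fun_prop⟩
  let pV : C(U ×ˢ V, V) := ⟨fun q => ⟨q.1.2, q.2.2⟩, by fun_prop⟩
  exact admitsMotionPlanner_of_homotopic
    ((hU.comp (.refl pU)).trans (hV.comp (.refl pV)).symm)

theorem topologicalComplexity_le_mul_self {k : ℕ} {U : Fin k → Set X} (x₀ : X)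
    (hopen : ∀ i, IsOpen (U i)) (hcover : ⋃ i, U i = univ)
    (hnull : ∀ i, ((ContinuousMap.id X).restrict (U i)).Homotopic (const (U i) x₀)) :
    topologicalComplexity X ≤ k * k := by
  refine Nat.sInf_le ⟨fun j => U (finProdFinEquiv.symm j).1 ×ˢ U (finProdFinEquiv.symm j).2,
    fun j => (hopen _).prod (hopen _), ?_, fun j => admitsMotionPlanner_prod (hnull _) (hnull _)⟩
  refine eq_univ_of_forall fun p => ?_
  obtain ⟨i, hi⟩ := mem_iUnion.mp (hcover ▸ mem_univ p.1)
  obtain ⟨j, hj⟩ := mem_iUnion.mp (hcover ▸ mem_univ p.2)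
  exact mem_iUnion.mpr ⟨finProdFinEquiv (i, j), by simpa using ⟨hi, hj⟩⟩

end MotionPlanner

namespace SCirc

variable {n : ℕ}

instance : DecidableEq (SCirc n) := inferInstanceAs (DecidableEq (Fin n ⊕ Fin n))

theorem le_refl : ∀ a : SCirc n, le a a
  | Sum.inl _ => rfl
  | Sum.inr _ => rfl

def y0 (hn : 0 < n) : SCirc n := y ⟨0, hn⟩

theorem eq_y0_of_y0_le {hn : 0 < n} {b : SCirc n} (h : le (y0 hn) b) : b = y0 hn := by
  cases b with
  | inl j => exact h.elim
  | inr j => exact congrArg Sum.inr (Eq.symm h)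

/-- Position on the fence `𝕊¹_n ∖ {y₀}`, counted from `x₀`; the value at `y₀` is junk. -/
def pos : SCirc n → ℕ
  | Sum.inl j => 2 * j
  | Sum.inr j => 2 * j - 1

def pt (hn : 0 < n) (k : ℕ) : SCirc n :=
  if k % 2 = 0 then x ⟨k / 2 % n, Nat.mod_lt _ hn⟩ else y ⟨(k + 1) / 2 % n, Nat.mod_lt _ hn⟩

/-- The zigzag order on `ℕ`, in which each odd number lies above its two neighbours. -/
def FenceLE (k l : ℕ) : Prop := k = l ∨ l % 2 = 1 ∧ (k + 1 = l ∨ k = l + 1)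

theorem pt_mono (hn : 0 < n) {k l : ℕ} (h : FenceLE k l) : le (pt hn k) (pt hn l) := by
  rcases h with rfl | ⟨hl, rfl | rfl⟩
  · exact le_refl _
  · rw [pt, pt, if_pos (by omega), if_neg (by omega)]
    refine Or.inr ?_
    change k / 2 % n = ((k + 1 + 1) / 2 % n + n - 1) % n
    have hlt := Nat.mod_lt (k / 2 + 1) hn
    rw [show (k + 1 + 1) / 2 = k / 2 + 1 by omega,
      show (k / 2 + 1) % n + n - 1 = (k / 2 + 1) % n + (n - 1) by omega, Nat.mod_add_mod,
      show k / 2 + 1 + (n - 1) = k / 2 + n by omega, Nat.add_mod_right]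
  · rw [pt, pt, if_pos (by omega), if_neg (by omega)]
    exact Or.inl rfl

theorem pos_le (z : SCirc n) : pos z ≤ 2 * n - 2 := by
  cases z with
  | inl j => have := j.isLt; change 2 * j.val ≤ _; omega
  | inr j => have := j.isLt; change 2 * j.val - 1 ≤ _; omega

theorem pt_pos (hn : 0 < n) {z : SCirc n} (hz : z ≠ y0 hn) : pt hn (pos z) = z := by
  cases z with
  | inl j =>
    rw [pos, pt, if_pos (by omega)]
    exact congrArg Sum.inl (Fin.ext (by simp [Nat.mod_eq_of_lt j.isLt]))
  | inr j =>
    have hj : j.val ≠ 0 := fun h => hz (congrArg Sum.inr (Fin.ext h))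
    rw [pos, pt, if_neg (by omega)]
    exact congrArg Sum.inr (Fin.ext (by
      simp only [show (2 * j.val - 1 + 1) / 2 = j.val by omega, Nat.mod_eq_of_lt j.isLt]))

theorem pt_top (hn : 0 < n) : pt hn (2 * n - 1) = y0 hn := by
  rw [pt, if_neg (by omega)]
  exact congrArg Sum.inr (Fin.ext (by simp [show (2 * n - 1 + 1) / 2 = n by omega]))

theorem fenceLE_pos (hn : 0 < n) {a b : SCirc n} (hab : le a b) (hb : b ≠ y0 hn) :
    FenceLE (pos a) (pos b) := by
  cases a with
  | inl i =>
    cases b with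
    | inl j => exact Or.inl (by rw [show i = j from hab])
    | inr j =>
      have hj : j.val ≠ 0 := fun h => hb (congrArg Sum.inr (Fin.ext h))
      have := j.isLt
      change FenceLE (2 * i.val) (2 * j.val - 1)
      rcases hab with rfl | h
      · exact Or.inr ⟨by omega, Or.inr (by omega)⟩
      · rw [show j.val + n - 1 = j.val - 1 + n by omega, Nat.add_mod_right,
          Nat.mod_eq_of_lt (by omega)] at h
        exact Or.inr ⟨by omega, Or.inl (by omega)⟩
  | inr i =>
    cases b with
    | inl j => exact hab.elim
    | inr j => exact Or.inl (by rw [show i = j from hab])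

/-- Stage `s` of the deformation of `𝕊¹_n ∖ {y₀}` onto `x_{n-1}`: every point at fence position
below `s` is moved to position `s`. -/
def collapse (hn : 0 < n) (s : ℕ) (z : SCirc n) : SCirc n :=
  if z = y0 hn then z else pt hn (min (max (pos z) s) (2 * n - 2))

theorem collapse_y0 (hn : 0 < n) (s : ℕ) : collapse hn s (y0 hn) = y0 hn := by
  simp [collapse]

theorem collapse_zero (hn : 0 < n) (z : SCirc n) : collapse hn 0 z = z := by
  unfold collapse
  split_ifs with hz
  · rfl
  · rw [show min (max (pos z) 0) (2 * n - 2) = pos z by have := pos_le z; omega, pt_pos hn hz]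

theorem collapse_mono (hn : 0 < n) (s : ℕ) {a b : SCirc n} (hab : le a b) (hb : b ≠ y0 hn) :
    le (collapse hn s a) (collapse hn s b) := by
  have ha : a ≠ y0 hn := fun h => hb (eq_y0_of_y0_le (h ▸ hab))
  have hfence := fenceLE_pos hn hab hb
  have := pos_le a
  have := pos_le b
  rw [collapse, collapse, if_neg ha, if_neg hb]
  apply pt_mono
  unfold FenceLE at *
  omega

theorem collapse_le_collapse_succ (hn : 0 < n) {s : ℕ} (hs : s % 2 = 0) (z : SCirc n) :
    le (collapse hn s z) (collapse hn (s + 1) z) := by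
  unfold collapse
  split_ifs
  · exact le_refl _
  · apply pt_mono
    unfold FenceLE
    omega

theorem collapse_succ_le_collapse (hn : 0 < n) {s : ℕ} (hs : s % 2 = 1) (z : SCirc n) :
    le (collapse hn (s + 1) z) (collapse hn s z) := by
  unfold collapse
  split_ifs
  · exact le_refl _
  · apply pt_mono
    unfold FenceLE
    omega

theorem collapse_le_y0 (hn : 0 < n) {s : ℕ} (hs : 2 * n - 2 ≤ s) (z : SCirc n) :
    le (collapse hn s z) (y0 hn) := by
  unfold collapse
  split_ifs with hz
  · exact hz ▸ le_refl _
  · rw [← pt_top hn]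
    apply pt_mono
    unfold FenceLE
    omega

end SCirc

theorem isBasePt_iff {k : ℕ} (hk : 0 < k) (z : SCirc k) : IsBasePt z ↔ z = SCirc.y0 hk := by
  constructor
  · rintro ⟨j, rfl, hj⟩
    exact congrArg SCirc.y (Fin.ext hj)
  · rintro rfl
    exact ⟨⟨0, hk⟩, rfl, rfl⟩

theorem equivalence_wedgeRel {m : ℕ} {f : Fin m → ℕ} : Equivalence (wedgeRel m f) where
  refl _ := Or.inl rfl
  symm := by
    rintro a b (rfl | ⟨ha, hb⟩)
    exacts [Or.inl rfl, Or.inr ⟨hb, ha⟩]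
  trans := by
    rintro a b c (rfl | ⟨ha, hb⟩) hbc
    · exact hbc
    · rcases hbc with rfl | ⟨-, hc⟩
      exacts [Or.inr ⟨ha, hb⟩, Or.inr ⟨ha, hc⟩]

namespace WedgeSCirc

variable {m : ℕ} {f : Fin m → ℕ}

def mk (i : Fin m) (z : SCirc (f i)) : WedgeSCirc m f := Quot.mk _ ⟨i, z⟩

theorem isOpen_iff {U : Set (WedgeSCirc m f)} :
    IsOpen U ↔ ∀ i (a b : SCirc (f i)), SCirc.le a b → mk i b ∈ U → mk i a ∈ U := by
  rw [← isQuotientMap_quot_mk.isOpen_preimage, isOpen_sigma_iff]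
  exact forall_congr' fun i =>
    ⟨fun h a b hab hb => h b hb a hab, fun h b hb a hab => h a b hab hb⟩

theorem mk_specializes_mk {i : Fin m} {a b : SCirc (f i)} (h : SCirc.le a b) :
    mk i a ⤳ mk i b :=
  specializes_iff_forall_open.mpr fun _ hU hb => isOpen_iff.mp hU i a b h hb

variable (hm : 0 < m) (hf : ∀ i, 0 < f i)

def base : WedgeSCirc m f := mk ⟨0, hm⟩ (SCirc.y0 (hf _))

theorem mk_eq_base_iff {i : Fin m} {z : SCirc (f i)} :
    mk i z = base hm hf ↔ z = SCirc.y0 (hf i) := by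
  rw [mk, base, mk, Quot.eq, equivalence_wedgeRel.eqvGen_iff]
  constructor
  · rintro (h | ⟨h, -⟩)
    · obtain ⟨rfl, h⟩ := Sigma.mk.inj_iff.mp h
      exact eq_of_heq h
    · exact (isBasePt_iff _ z).mp h
  · rintro rfl
    exact Or.inr ⟨(isBasePt_iff _ _).mpr rfl, (isBasePt_iff _ _).mpr rfl⟩

def collapse (s : ℕ) : WedgeSCirc m f → WedgeSCirc m f :=
  Quot.lift (fun p => mk p.1 (SCirc.collapse (hf p.1) s p.2)) <| by
    rintro a b (rfl | ⟨ha, hb⟩)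
    · rfl
    · refine Quot.sound (Or.inr ⟨?_, ?_⟩)
      · rw [(isBasePt_iff (hf a.1) a.2).mp ha, SCirc.collapse_y0]
        exact (isBasePt_iff _ _).mpr rfl
      · rw [(isBasePt_iff (hf b.1) b.2).mp hb, SCirc.collapse_y0]
        exact (isBasePt_iff _ _).mpr rfl

theorem collapse_zero (w : WedgeSCirc m f) : collapse hf 0 w = w := by
  induction w using Quot.ind with
  | mk p => exact congrArg (mk p.1) (SCirc.collapse_zero _ p.2)

theorem isOpen_compl_base : IsOpen ({base hm hf}ᶜ : Set (WedgeSCirc m f)) := by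
  refine isOpen_iff.mpr fun i a b hab hb ha => hb ?_
  rw [mem_singleton_iff, mk_eq_base_iff] at ha ⊢
  exact SCirc.eq_y0_of_y0_le (ha ▸ hab)

theorem isOpen_setOf_specializes_base : IsOpen {w : WedgeSCirc m f | w ⤳ base hm hf} :=
  isOpen_iff.mpr fun _ _ _ hab hb => (mk_specializes_mk hab).trans hb

theorem continuousOn_collapse (s : ℕ) : ContinuousOn (collapse hf s) {base hm hf}ᶜ := by
  refine continuousOn_iff'.mpr fun t ht => ⟨{base hm hf}ᶜ ∩ collapse hf s ⁻¹' t, ?_, ?_⟩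
  · refine isOpen_iff.mpr fun i a b hab ⟨hb, hbt⟩ =>
      ⟨isOpen_iff.mp (isOpen_compl_base hm hf) i a b hab hb, ?_⟩
    have hb' : b ≠ SCirc.y0 (hf i) := fun h => hb ((mk_eq_base_iff hm hf).mpr h)
    exact (mk_specializes_mk (SCirc.collapse_mono (hf i) s hab hb')).mem_open ht hbt
  · ext w
    simp only [mem_inter_iff]
    tauto

theorem collapse_specializes_collapse_succ {s : ℕ} (hs : s % 2 = 0) (w : WedgeSCirc m f) :
    collapse hf s w ⤳ collapse hf (s + 1) w := by
  induction w using Quot.ind with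
  | mk p => exact mk_specializes_mk (SCirc.collapse_le_collapse_succ _ hs p.2)

theorem collapse_succ_specializes_collapse {s : ℕ} (hs : s % 2 = 1) (w : WedgeSCirc m f) :
    collapse hf (s + 1) w ⤳ collapse hf s w := by
  induction w using Quot.ind with
  | mk p => exact mk_specializes_mk (SCirc.collapse_succ_le_collapse _ hs p.2)

theorem collapse_specializes_base {s : ℕ} (hs : ∀ i, 2 * f i - 2 ≤ s) (w : WedgeSCirc m f) :
    collapse hf s w ⤳ base hm hf := by
  induction w using Quot.ind with
  | mk p =>
    have hbase : mk p.1 (SCirc.y0 (hf p.1)) = base hm hf := (mk_eq_base_iff hm hf).mpr rfl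
    exact hbase ▸ mk_specializes_mk (SCirc.collapse_le_y0 _ (hs p.1) p.2)

theorem homotopic_compl_base :
    ((ContinuousMap.id _).restrict {base hm hf}ᶜ).Homotopic (const _ (base hm hf)) := by
  let c (s : ℕ) : C(({base hm hf}ᶜ : Set (WedgeSCirc m f)), WedgeSCirc m f) :=
    ⟨_, (continuousOn_collapse hm hf s).domRestrict⟩
  have hc : ∀ s, ((ContinuousMap.id _).restrict {base hm hf}ᶜ).Homotopic (c s) := by
    intro s
    induction s with
    | zero =>
      have hc0 : (ContinuousMap.id _).restrict {base hm hf}ᶜ = c 0 :=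
        ContinuousMap.ext fun w => (collapse_zero hf w.1).symm
      exact hc0 ▸ .refl _
    | succ s ih =>
      refine ih.trans ?_
      rcases Nat.mod_two_eq_zero_or_one s with hs | hs
      · exact .of_specializes fun w => collapse_specializes_collapse_succ hf hs w.1
      · exact (Homotopic.of_specializes fun w => collapse_succ_specializes_collapse hf hs w.1).symm
  obtain ⟨S, hS⟩ := Finite.exists_le fun i => 2 * f i - 2
  exact (hc S).trans (.of_specializes fun w => collapse_specializes_base hm hf hS w)

theorem homotopic_setOf_specializes_base :
    ((ContinuousMap.id _).restrict {w : WedgeSCirc m f | w ⤳ base hm hf}).Homotopic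
      (const _ (base hm hf)) :=
  .of_specializes fun w => w.2

end WedgeSCirc

/-- Let `⋁_{i=1}^m 𝕊¹_{n_i}`, with each `n_i ≥ 2`, be the wedge of
`m` finite models of the circle, formed by identifying the points `y_0` of all
factors to a single point.  Then `TC(⋁_{i=1}^m 𝕊¹_{n_i}) ≤ 4`. -/
theorem tc_wedge_scirc_le_four (m : ℕ) (hm : 0 < m) (f : Fin m → ℕ)
    (hf : ∀ i, 2 ≤ f i) :
    topologicalComplexity (WedgeSCirc m f) ≤ 4 := by
  have hpos : ∀ i, 0 < f i := fun i => two_pos.trans_le (hf i)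
  set x₀ := WedgeSCirc.base hm hpos
  refine topologicalComplexity_le_mul_self (k := 2) (U := ![{x₀}ᶜ, {w | w ⤳ x₀}]) x₀ ?_ ?_ ?_
  · exact Fin.forall_fin_two.mpr
      ⟨WedgeSCirc.isOpen_compl_base hm hpos, WedgeSCirc.isOpen_setOf_specializes_base hm hpos⟩
  · refine eq_univ_of_forall fun w => mem_iUnion.mpr ?_
    by_cases hw : w = x₀
    · exact ⟨1, hw ▸ specializes_rfl⟩
    · exact ⟨0, hw⟩
  · exact Fin.forall_fin_two.mpr ⟨WedgeSCirc.homotopic_compl_base hm hpos,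
      WedgeSCirc.homotopic_setOf_specializes_base hm hpos⟩
end
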